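/- arXiv:1502.06225 — 3 statements merged into one kernel-verified Lean document; each statement's English description precedes it below -/
import Mathlib

section
/- Let Γ ∈ ℝᴺ be Δ-admissible, let z̄ ∈ ∂_int F_NΩ, and let C be a cluster of P_{z̄} with z̄_C ∈ Ω. Then there exists δ > 0 such that for every z ∈ F_NΩ with |z − z̄| < δ one has |∇H_Ω(z)| ≥ (C_Γ/(4π)) · (Σ_{i∈C} |z_i − z̄_C|²)^{−1/2}. -/
open Complex Metric Set Filter Topology
open scoped BigOperators Classical ENNReal

noncomputable section

/-- The configuration space of `N` points, modelled as `ℂ^N` with the Euclidean (ℓ²) norm. -/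
abbrev Conf (N : ℕ) := PiLp 2 (fun _ : Fin N => ℂ)

/-- The configuration space `F_N Ω` of `N` distinct points in `Ω`. -/
def ConfigSp (N : ℕ) (Ω : Set ℂ) : Set (Conf N) :=
  {z | (∀ j, z j ∈ Ω) ∧ Function.Injective z}

/-- The Kirchhoff–Routh path function `H_Ω`. -/
def KRH {N : ℕ} (Γ : Fin N → ℝ) (g G : ℂ → ℂ → ℝ) (z : Conf N) : ℝ :=
  ∑ j, (Γ j)^2 * g (z j) (z j) +
    ∑ i, ∑ j, if i = j then 0 else Γ i * Γ j * G (z i) (z j)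

/-- The hypotheses on (hydrodynamic) Green's functions `G` with regular part `g`,
relative to the nearest-point projection `p` on the boundary strip `Ω_ε`. -/
structure GreenAssumptions (Ω : Set ℂ) (G g : ℂ → ℂ → ℝ) (p : ℂ → ℂ) (ε : ℝ) : Prop where
  εpos : 0 < ε
  lowerBdd : ∃ C₀ : ℝ, ∀ x ∈ Ω, ∀ y ∈ Ω, x ≠ y → C₀ ≤ G x y
  decomp : ∀ x ∈ Ω, ∀ y ∈ Ω, x ≠ y →
    G x y = g x y - (1 / (2 * Real.pi)) * Real.log (‖x - y‖)
  g_smooth : ContDiffOn ℝ 1 (fun q : ℂ × ℂ => g q.1 q.2) (Ω ×ˢ Ω)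
  g_upperBdd : ∃ C₁ : ℝ, ∀ x ∈ Ω, ∀ y ∈ Ω, g x y ≤ C₁
  G_C1_bound : ∀ ε' > (0:ℝ), ∃ C₂ : ℝ, ∀ x ∈ Ω, ∀ y ∈ Ω, ε' ≤ dist x y →
    |G x y| + ‖gradient (fun w => G w y) x‖ + ‖gradient (fun w => G x w) y‖ ≤ C₂
  proj_mem : ∀ z ∈ Ω, infDist z (frontier Ω) < ε → p z ∈ frontier Ω
  proj_dist : ∀ z ∈ Ω, infDist z (frontier Ω) < ε → dist z (p z) = infDist z (frontier Ω)
  refl_bound : ∃ C₃ : ℝ, ∀ x ∈ Ω, infDist x (frontier Ω) < ε →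
    ∀ y ∈ Ω, infDist y (frontier Ω) < ε →
    |g x y - (1 / (2 * Real.pi)) * Real.log (‖(2 • p x - x) - y‖)|
      + ‖gradient (fun w => g w y -
          (1 / (2 * Real.pi)) * Real.log (‖(2 • p w - w) - y‖)) x‖
      + ‖gradient (fun w => g x w -
          (1 / (2 * Real.pi)) * Real.log (‖(2 • p x - x) - w‖)) y‖ ≤ C₃
  line_bound : ∃ C₄ : ℝ, ∀ w v : ℂ, ‖v‖ = 1 → ∀ r s t : ℝ, r < s → s < t →
    w + (r : ℂ) * v ∈ Ω → w + (s : ℂ) * v ∈ Ω → w + (t : ℂ) * v ∈ Ω →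
    -C₄ ≤ G (w + (r : ℂ) * v) (w + (s : ℂ) * v) - G (w + (r : ℂ) * v) (w + (t : ℂ) * v)

/-- `Γ` is Δ-admissible. -/
def DeltaAdmissible {N : ℕ} (Γ : Fin N → ℝ) : Prop :=
  ∀ C : Finset (Fin N), 2 ≤ C.card →
    (∑ i ∈ C, ∑ j ∈ C, if i = j then 0 else Γ i * Γ j) ≠ 0

/-- `Γ` is ∂-admissible. -/
def PartialAdmissible {N : ℕ} (Γ : Fin N → ℝ) : Prop :=
  ∀ C : Finset (Fin N), 2 ≤ C.card →
    (∑ i ∈ C, ∑ j ∈ C, if i = j then 0 else |Γ i * Γ j|) < ∑ i ∈ C, (Γ i)^2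

/-- `Γ` is L-admissible with permutation `σ`: the numbers `t_j = η (−1)^j Γ_{σ⁻¹(j)}`
are positive and nondecreasing for some sign `η`. -/
def LAdmissibleWith {N : ℕ} (Γ : Fin N → ℝ) (σ : Equiv.Perm (Fin N)) : Prop :=
  ∃ η : ℝ, (η = 1 ∨ η = -1) ∧
    (∀ j : Fin N, 0 < η * (-1) ^ (j : ℕ) * Γ (σ.symm j)) ∧
    (∀ j k : Fin N, j ≤ k →
      η * (-1) ^ (j : ℕ) * Γ (σ.symm j) ≤ η * (-1) ^ (k : ℕ) * Γ (σ.symm k))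

/-- `Γ` is L-admissible. -/
def LAdmissible {N : ℕ} (Γ : Fin N → ℝ) : Prop :=
  ∃ σ : Equiv.Perm (Fin N), LAdmissibleWith Γ σ

/-- `φ` is a positive gradient flow of `H` on `ConfigSp N Ω` with (maximal) existence
times `tp`. -/
def IsGradFlow {N : ℕ} (Ω : Set ℂ) (H : Conf N → ℝ) (φ : Conf N → ℝ → Conf N)
    (tp : Conf N → ℝ≥0∞) : Prop :=
  ∀ z ∈ ConfigSp N Ω, (0 : ℝ≥0∞) < tp z ∧ φ z 0 = z ∧
    ∀ t : ℝ, 0 ≤ t → ENNReal.ofReal t < tp z →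
      φ z t ∈ ConfigSp N Ω ∧ HasDerivAt (φ z) (gradient H (φ z t)) t

/-- The flow `φ` is maximal: no solution of the gradient flow equation starting in
`ConfigSp N Ω` exists beyond time `tp z`. -/
def IsMaximalFlow {N : ℕ} (Ω : Set ℂ) (H : Conf N → ℝ) (tp : Conf N → ℝ≥0∞) : Prop :=
  ∀ z ∈ ConfigSp N Ω, ∀ (ψ : ℝ → Conf N) (T' : ℝ≥0∞), tp z < T' → ψ 0 = z →
    (∀ t : ℝ, 0 ≤ t → ENNReal.ofReal t < T' →
      ψ t ∈ ConfigSp N Ω ∧ HasDerivAt ψ (gradient H (ψ t)) t) → False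

/-- `C` is a cluster of the partition `P_z` determined by the tuple `z`: a maximal set of
at least two indices on which `z` is constant. -/
def IsCluster {N : ℕ} (z : Fin N → ℂ) (C : Finset (Fin N)) : Prop :=
  2 ≤ C.card ∧ (∀ i ∈ C, ∀ j ∈ C, z i = z j) ∧ ∀ k, k ∉ C → ∀ i ∈ C, z k ≠ z i


/-!
Test the gradient against the velocity `v` of the dilation of the cluster `C` about its
centre `b = z̄_C`: `v_i = z_i - b` for `i ∈ C` and `v_i = 0` otherwise. For `i, j ∈ C` the
singular part `-(1/2π) log |z_i - z_j|` of `G` changes only by a constant under dilations, so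
its derivative along `v` is exactly `-1/2π`; these terms add up to
`-(1/2π) Σ_{i ≠ j ∈ C} Γ_i Γ_j`, of modulus at least `C_Γ/2π`. The remaining terms (the regular
part `g` near `(b, b)`, and the pairs joining `C` to points that stay a fixed distance away)
have bounded derivatives, so they contribute `O(|v|)`, which is below `C_Γ/4π` close to `z̄`.
Since `dH(z) v ≤ |∇H(z)| |v|` and `|v| = (Σ_{i∈C} |z_i - b|²)^{1/2}`, the bound follows.
-/

section LogNorm

variable {E : Type*} [NormedAddCommGroup E] [InnerProductSpace ℝ E]

theorem differentiableAt_log_norm {a : E} (ha : a ≠ 0) :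
    DifferentiableAt ℝ (fun u : E => Real.log ‖u‖) a :=
  (differentiableAt_id.norm ℝ ha).log (norm_ne_zero_iff.2 ha)

theorem differentiableAt_log_norm_sub {x y : E} (hxy : x ≠ y) :
    DifferentiableAt ℝ (fun q : E × E => Real.log ‖q.1 - q.2‖) (x, y) :=
  ((differentiableAt_fst.sub differentiableAt_snd).norm ℝ (sub_ne_zero.2 hxy)).log
    (norm_ne_zero_iff.2 (sub_ne_zero.2 hxy))

/-- Since `log ‖t • a‖ = log t + log ‖a‖` for `t > 0`, the radial derivative is `1`. -/
theorem fderiv_log_norm_apply_self {a : E} (ha : a ≠ 0) :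
    fderiv ℝ (fun u : E => Real.log ‖u‖) a a = 1 := by
  have hray : HasDerivAt (fun t : ℝ => Real.log ‖t • a‖)
      (fderiv ℝ (fun u : E => Real.log ‖u‖) a a) 1 := by
    have hline : HasDerivAt (fun t : ℝ => t • a) a 1 := by
      simpa using (hasDerivAt_id (1 : ℝ)).smul_const a
    exact (differentiableAt_log_norm ha).hasFDerivAt.comp_hasDerivAt_of_eq 1 hline
      (one_smul ℝ a).symm
  have hlog : HasDerivAt (fun t : ℝ => Real.log ‖t • a‖) 1 1 := by
    have h : HasDerivAt (fun t : ℝ => Real.log t + Real.log ‖a‖) 1 1 := by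
      simpa using (Real.hasDerivAt_log one_ne_zero).add_const (Real.log ‖a‖)
    refine h.congr_of_eventuallyEq ?_
    filter_upwards [lt_mem_nhds one_pos] with t ht
    rw [norm_smul, Real.norm_of_nonneg ht.le, Real.log_mul ht.ne' (norm_ne_zero_iff.2 ha)]
  exact hray.unique hlog

theorem fderiv_log_norm_sub_apply {x y : E} (hxy : x ≠ y) {h : E × E} (hh : h.1 - h.2 = x - y) :
    fderiv ℝ (fun q : E × E => Real.log ‖q.1 - q.2‖) (x, y) h = 1 := by
  have hsub : HasFDerivAt (fun q : E × E => q.1 - q.2)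
      (ContinuousLinearMap.fst ℝ E E - ContinuousLinearMap.snd ℝ E E) (x, y) :=
    hasFDerivAt_fst.sub hasFDerivAt_snd
  have hcomp := (differentiableAt_log_norm (sub_ne_zero.2 hxy)).hasFDerivAt.comp (x, y) hsub
  rw [HasFDerivAt.fderiv (f := fun q : E × E => Real.log ‖q.1 - q.2‖) hcomp]
  simpa [← map_sub, hh] using fderiv_log_norm_apply_self (sub_ne_zero.2 hxy)

end LogNorm

theorem norm_fderiv_uncurry_le {𝕜 E F H : Type*} [NontriviallyNormedField 𝕜]
    [NormedAddCommGroup E] [NormedSpace 𝕜 E] [NormedAddCommGroup F] [NormedSpace 𝕜 F]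
    [NormedAddCommGroup H] [NormedSpace 𝕜 H] {f : E → F → H} {x : E} {y : F}
    (hf : DifferentiableAt 𝕜 (Function.uncurry f) (x, y)) :
    ‖fderiv 𝕜 (Function.uncurry f) (x, y)‖ ≤
      ‖fderiv 𝕜 (fun u => f u y) x‖ + ‖fderiv 𝕜 (f x) y‖ := by
  set D := fderiv 𝕜 (Function.uncurry f) (x, y)
  have h₁ : fderiv 𝕜 (fun u => f u y) x = D.comp (ContinuousLinearMap.inl 𝕜 E F) :=
    HasFDerivAt.fderiv (f := Function.uncurry f ∘ fun u => (u, y))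
      (hf.hasFDerivAt.comp x (hasFDerivAt_prodMk_left x y))
  have h₂ : fderiv 𝕜 (f x) y = D.comp (ContinuousLinearMap.inr 𝕜 E F) :=
    HasFDerivAt.fderiv (f := Function.uncurry f ∘ fun v => (x, v))
      (hf.hasFDerivAt.comp y (hasFDerivAt_prodMk_right x y))
  rw [h₁, h₂]
  refine D.opNorm_le_bound (by positivity) fun w => ?_
  calc ‖D w‖ = ‖D.comp (ContinuousLinearMap.inl 𝕜 E F) w.1
          + D.comp (ContinuousLinearMap.inr 𝕜 E F) w.2‖ := by
        rw [D.comp_inl_add_comp_inr]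
    _ ≤ ‖D.comp (ContinuousLinearMap.inl 𝕜 E F)‖ * ‖w.1‖
          + ‖D.comp (ContinuousLinearMap.inr 𝕜 E F)‖ * ‖w.2‖ :=
        norm_add_le_of_le (ContinuousLinearMap.le_opNorm _ _) (ContinuousLinearMap.le_opNorm _ _)
    _ ≤ _ := by
        rw [add_mul]
        gcongr
        exacts [norm_fst_le w, norm_snd_le w]

section Gradient

variable {F : Type*} [NormedAddCommGroup F] [InnerProductSpace ℝ F] [CompleteSpace F]

theorem norm_fderiv_eq_norm_gradient (f : F → ℝ) (x : F) :
    ‖fderiv ℝ f x‖ = ‖gradient f x‖ := by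
  rw [← toDual_gradient]
  exact (InnerProductSpace.toDual ℝ F).norm_map _

theorem norm_fderiv_uncurry_le_norm_gradient {f : F → F → ℝ} {x y : F}
    (hf : DifferentiableAt ℝ (Function.uncurry f) (x, y)) :
    ‖fderiv ℝ (Function.uncurry f) (x, y)‖ ≤
      ‖gradient (fun w => f w y) x‖ + ‖gradient (fun w => f x w) y‖ := by
  simpa only [norm_fderiv_eq_norm_gradient] using norm_fderiv_uncurry_le hf

theorem abs_fderiv_apply_le_norm_gradient_mul (f : F → ℝ) (x v : F) :
    |fderiv ℝ f x v| ≤ ‖gradient f x‖ * ‖v‖ := by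
  rw [← inner_gradient_left]
  exact abs_real_inner_le_norm _ _

end Gradient

theorem norm_apply_pair_le {ι E F : Type*} [Fintype ι] {p : ENNReal} [Fact (1 ≤ p)]
    [NormedAddCommGroup E] [NormedSpace ℝ E] [NormedAddCommGroup F] [NormedSpace ℝ F]
    (D : E × E →L[ℝ] F) (v : PiLp p fun _ : ι => E) (i j : ι) :
    ‖D (v i, v j)‖ ≤ ‖D‖ * ‖v‖ :=
  (D.le_opNorm _).trans <| by
    gcongr
    exact max_le (PiLp.norm_apply_le v i) (PiLp.norm_apply_le v j)

def IsLogDecomposition (Ω : Set ℂ) (G g : ℂ → ℂ → ℝ) : Prop :=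
  ∀ x ∈ Ω, ∀ y ∈ Ω, x ≠ y → G x y = g x y - (1 / (2 * Real.pi)) * Real.log ‖x - y‖

section LogDecomposition

variable {Ω : Set ℂ} {G g : ℂ → ℂ → ℝ} {x y : ℂ}

theorem IsLogDecomposition.eventuallyEq (hdec : IsLogDecomposition Ω G g) (hΩ : IsOpen Ω)
    (hx : x ∈ Ω) (hy : y ∈ Ω) (hxy : x ≠ y) :
    Function.uncurry G =ᶠ[𝓝 (x, y)]
      fun q => Function.uncurry g q - (1 / (2 * Real.pi)) * Real.log ‖q.1 - q.2‖ := by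
  filter_upwards [(hΩ.prod hΩ).mem_nhds (mk_mem_prod hx hy),
    (isOpen_ne_fun continuous_fst continuous_snd).mem_nhds hxy] with q hq hq'
  exact hdec q.1 hq.1 q.2 hq.2 hq'

theorem IsLogDecomposition.differentiableAt (hdec : IsLogDecomposition Ω G g) (hΩ : IsOpen Ω)
    (hg : DifferentiableOn ℝ (Function.uncurry g) (Ω ×ˢ Ω))
    (hx : x ∈ Ω) (hy : y ∈ Ω) (hxy : x ≠ y) :
    DifferentiableAt ℝ (Function.uncurry G) (x, y) := by
  refine ((hdec.eventuallyEq hΩ hx hy hxy).differentiableAt_iff).2 ?_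
  exact (hg.differentiableAt ((hΩ.prod hΩ).mem_nhds (mk_mem_prod hx hy))).sub
    ((differentiableAt_log_norm_sub hxy).const_mul _)

theorem IsLogDecomposition.fderiv_apply_of_sub_eq (hdec : IsLogDecomposition Ω G g)
    (hΩ : IsOpen Ω) (hg : DifferentiableOn ℝ (Function.uncurry g) (Ω ×ˢ Ω))
    (hx : x ∈ Ω) (hy : y ∈ Ω) (hxy : x ≠ y) {h : ℂ × ℂ} (hh : h.1 - h.2 = x - y) :
    fderiv ℝ (Function.uncurry G) (x, y) h
      = fderiv ℝ (Function.uncurry g) (x, y) h - 1 / (2 * Real.pi) := by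
  have hgxy := hg.differentiableAt ((hΩ.prod hΩ).mem_nhds (mk_mem_prod hx hy))
  have hlog := differentiableAt_log_norm_sub hxy
  rw [(hdec.eventuallyEq hΩ hx hy hxy).fderiv_eq, fderiv_fun_sub hgxy (hlog.const_mul _),
    fderiv_const_mul hlog]
  simp [fderiv_log_norm_sub_apply hxy hh]

end LogDecomposition

theorem fderiv_KRH_apply {N : ℕ} (Γ : Fin N → ℝ) {g G : ℂ → ℂ → ℝ} {z : Conf N}
    (hg : ∀ j, DifferentiableAt ℝ (Function.uncurry g) (z j, z j))
    (hG : ∀ i j, i ≠ j → DifferentiableAt ℝ (Function.uncurry G) (z i, z j)) (v : Conf N) :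
    fderiv ℝ (KRH Γ g G) z v =
      ∑ j, Γ j ^ 2 * fderiv ℝ (Function.uncurry g) (z j, z j) (v j, v j) +
        ∑ i, ∑ j, if i = j then 0 else
          Γ i * Γ j * fderiv ℝ (Function.uncurry G) (z i, z j) (v i, v j) := by
  let pair : Fin N → Fin N → Conf N →L[ℝ] ℂ × ℂ := fun i j =>
    (PiLp.proj 2 (fun _ : Fin N => ℂ) i).prod (PiLp.proj 2 (fun _ : Fin N => ℂ) j)
  have hdiag : ∀ j ∈ Finset.univ, HasFDerivAt (fun w : Conf N => Γ j ^ 2 * g (w j) (w j))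
      (Γ j ^ 2 • (fderiv ℝ (Function.uncurry g) (z j, z j)).comp (pair j j)) z :=
    fun j _ => ((hg j).hasFDerivAt.comp z (pair j j).hasFDerivAt).const_mul _
  have hoff : ∀ i ∈ Finset.univ, ∀ j ∈ Finset.univ,
      HasFDerivAt (fun w : Conf N => if i = j then 0 else Γ i * Γ j * G (w i) (w j))
        (if i = j then 0 else
          (Γ i * Γ j) • (fderiv ℝ (Function.uncurry G) (z i, z j)).comp (pair i j)) z := by
    intro i _ j _
    split_ifs with hij
    · exact hasFDerivAt_const 0 z
    · exact ((hG i j hij).hasFDerivAt.comp z (pair i j).hasFDerivAt).const_mul _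
  have hKRH := (HasFDerivAt.fun_sum hdiag).fun_add
    (HasFDerivAt.fun_sum fun i hi => HasFDerivAt.fun_sum (hoff i hi))
  rw [HasFDerivAt.fderiv (f := KRH Γ g G) hKRH]
  simp [pair, apply_ite (fun L : Conf N →L[ℝ] ℝ => L v)]

section Cluster

variable {N : ℕ}

def clusterSum (Γ : Fin N → ℝ) (C : Finset (Fin N)) : ℝ :=
  ∑ i ∈ C, ∑ j ∈ C, if i = j then 0 else Γ i * Γ j

theorem clusterSum_eq_sum_univ (Γ : Fin N → ℝ) (C : Finset (Fin N)) :
    clusterSum Γ C = ∑ i, ∑ j, if i ∈ C ∧ j ∈ C ∧ i ≠ j then Γ i * Γ j else 0 := by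
  simp [clusterSum, ite_and, Finset.sum_ite_mem]

/-- The velocity of the dilation of the cluster `C` about `b`. -/
def clusterDisplacement (C : Finset (Fin N)) (b : ℂ) (z : Conf N) : Conf N :=
  WithLp.toLp 2 fun i => if i ∈ C then z i - b else 0

variable {C : Finset (Fin N)} {b : ℂ} {z : Conf N} {i j : Fin N}

theorem clusterDisplacement_of_mem (hi : i ∈ C) : clusterDisplacement C b z i = z i - b :=
  if_pos hi

theorem clusterDisplacement_of_notMem (hi : i ∉ C) : clusterDisplacement C b z i = 0 :=
  if_neg hi

theorem norm_clusterDisplacement :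
    ‖clusterDisplacement C b z‖ = √(∑ i ∈ C, ‖z i - b‖ ^ 2) := by
  rw [EuclideanSpace.norm_eq, ← Finset.univ_inter C, ← Finset.sum_ite_mem]
  simp [clusterDisplacement, apply_ite]

theorem clusterDisplacement_ne_zero (hz : Function.Injective z)
    (hC : 2 ≤ C.card) : clusterDisplacement C b z ≠ 0 := by
  obtain ⟨i, hi, j, hj, hij⟩ := Finset.one_lt_card.1 hC
  intro h0
  have hvi := congrArg (· i) h0
  have hvj := congrArg (· j) h0
  simp only [clusterDisplacement_of_mem hi, clusterDisplacement_of_mem hj, PiLp.zero_apply,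
    sub_eq_zero] at hvi hvj
  exact hij (hz (hvi.trans hvj.symm))

theorem tendsto_norm_clusterDisplacement {zb : Conf N} (hb : ∀ i ∈ C, zb i = b) :
    Tendsto (fun z => ‖clusterDisplacement C b z‖) (𝓝 zb) (𝓝 0) := by
  have hcont : Continuous fun z : Conf N => √(∑ i ∈ C, ‖z i - b‖ ^ 2) := by fun_prop
  have h0 : ∑ i ∈ C, ‖zb i - b‖ ^ 2 = 0 := Finset.sum_eq_zero fun i hi => by simp [hb i hi]
  simpa only [norm_clusterDisplacement, h0, Real.sqrt_zero] using hcont.tendsto zb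

theorem IsCluster.exists_eventually_separated {zb : Conf N} (hC : IsCluster zb C) :
    ∃ ε' > 0, ∀ᶠ z in 𝓝 zb, ∀ i ∈ C, ∀ k ∉ C, ε' ≤ dist (z i) (z k) := by
  have hsep : ∀ i ∈ C, ∀ k ∉ C, 0 < dist (zb i) (zb k) := fun i hi k hk =>
    dist_pos.2 (hC.2.2 k hk i hi).symm
  obtain ⟨ε', hε', hε'pos⟩ :
      ∃ ε', (∀ i ∈ C, ∀ k ∉ C, ε' < dist (zb i) (zb k)) ∧ 0 < ε' := by
    have h : ∀ᶠ ε' in 𝓝 (0 : ℝ), ∀ i ∈ C, ∀ k ∉ C, ε' < dist (zb i) (zb k) := by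
      simp only [eventually_all]
      exact fun i hi k hk => eventually_lt_nhds (hsep i hi k hk)
    exact ((h.filter_mono nhdsWithin_le_nhds).and (self_mem_nhdsWithin (s := Ioi 0))).exists
  refine ⟨ε', hε'pos, ?_⟩
  simp only [eventually_all]
  intro i hi k hk
  have hcont : Continuous fun z : Conf N => dist (z i) (z k) := by fun_prop
  exact (hcont.tendsto zb |>.eventually (lt_mem_nhds (hε' i hi k hk))).mono fun _ => le_of_lt

theorem eventually_norm_apply_pair_lt {X : Type*} [NormedAddCommGroup X] {φ : ℂ × ℂ → X}
    {zb : Conf N} (hb : ∀ i ∈ C, zb i = b) (hφ : ContinuousAt φ (b, b)) :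
    ∀ᶠ z in 𝓝 zb, ∀ i ∈ C, ∀ j ∈ C, ‖φ (z i, z j)‖ < ‖φ (b, b)‖ + 1 := by
  simp only [eventually_all]
  intro i hi j hj
  have hpair : Tendsto (fun z : Conf N => (z i, z j)) (𝓝 zb) (𝓝 (b, b)) := by
    rw [show (b, b) = (zb i, zb j) by rw [hb i hi, hb j hj]]
    exact Continuous.tendsto (by fun_prop) zb
  exact (hφ.tendsto.comp hpair).norm.eventually (gt_mem_nhds (lt_add_one _))

end Cluster

section Estimate

variable {N : ℕ} {Ω : Set ℂ} {G g : ℂ → ℂ → ℝ}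

theorem abs_fderiv_KRH_clusterDisplacement_add_le (hΩ : IsOpen Ω)
    (hdec : IsLogDecomposition Ω G g) (hg : DifferentiableOn ℝ (Function.uncurry g) (Ω ×ˢ Ω))
    (Γ : Fin N → ℝ) {C : Finset (Fin N)} {b : ℂ} {z : Conf N} (hz : z ∈ ConfigSp N Ω)
    {M : ℝ} (hM : 0 ≤ M)
    (hgM : ∀ i ∈ C, ∀ j ∈ C, ‖fderiv ℝ (Function.uncurry g) (z i, z j)‖ ≤ M)
    (hGM : ∀ i ∈ C, ∀ k ∉ C, ‖fderiv ℝ (Function.uncurry G) (z i, z k)‖ ≤ M ∧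
      ‖fderiv ℝ (Function.uncurry G) (z k, z i)‖ ≤ M) :
    |fderiv ℝ (KRH Γ g G) z (clusterDisplacement C b z) +
        1 / (2 * Real.pi) * clusterSum Γ C| ≤
      (∑ j, Γ j ^ 2 + ∑ i, ∑ j, |Γ i * Γ j|) * M * ‖clusterDisplacement C b z‖ := by
  obtain ⟨hzΩ, hzinj⟩ := hz
  set v := clusterDisplacement C b z
  have hgd : ∀ i j, DifferentiableAt ℝ (Function.uncurry g) (z i, z j) := fun i j =>
    hg.differentiableAt ((hΩ.prod hΩ).mem_nhds (mk_mem_prod (hzΩ i) (hzΩ j)))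
  have hGd : ∀ i j, i ≠ j → DifferentiableAt ℝ (Function.uncurry G) (z i, z j) :=
    fun i j hij => hdec.differentiableAt hΩ hg (hzΩ i) (hzΩ j) (hzinj.ne hij)
  have hterm : ∀ (c : ℝ) (D : ℂ × ℂ →L[ℝ] ℝ) i j, ‖D‖ ≤ M →
      |c * D (v i, v j)| ≤ |c| * (M * ‖v‖) := fun c D i j hD => by
    rw [abs_mul, ← Real.norm_eq_abs (D _)]
    gcongr
    exact (norm_apply_pair_le D v i j).trans (by gcongr)
  have hdiag : ∀ j, |Γ j ^ 2 * fderiv ℝ (Function.uncurry g) (z j, z j) (v j, v j)|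
      ≤ Γ j ^ 2 * (M * ‖v‖) := fun j => by
    by_cases hj : j ∈ C
    · exact (hterm (Γ j ^ 2) _ j j (hgM j hj j hj)).trans_eq (by rw [abs_sq])
    · simp only [v, clusterDisplacement_of_notMem hj, Prod.mk_zero_zero, map_zero, mul_zero,
        abs_zero]
      positivity
  have hoff : ∀ i j, |(if i = j then 0 else
        Γ i * Γ j * fderiv ℝ (Function.uncurry G) (z i, z j) (v i, v j)) +
      1 / (2 * Real.pi) * (if i ∈ C ∧ j ∈ C ∧ i ≠ j then Γ i * Γ j else 0)|
      ≤ |Γ i * Γ j| * (M * ‖v‖) := fun i j => by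
    by_cases hij : i = j
    · subst hij
      rw [if_pos rfl, if_neg fun h => h.2.2 rfl, mul_zero, add_zero, abs_zero]
      positivity
    rw [if_neg hij]
    by_cases hi : i ∈ C <;> by_cases hj : j ∈ C
    · have hsub : (v i, v j).1 - (v i, v j).2 = z i - z j := by
        simp [v, clusterDisplacement_of_mem hi, clusterDisplacement_of_mem hj]
      rw [if_pos ⟨hi, hj, hij⟩,
        hdec.fderiv_apply_of_sub_eq hΩ hg (hzΩ i) (hzΩ j) (hzinj.ne hij) hsub,
        show ∀ a c : ℝ, Γ i * Γ j * (a - c) + c * (Γ i * Γ j) = Γ i * Γ j * a by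
          intros; ring]
      exact hterm _ _ i j (hgM i hi j hj)
    · rw [if_neg fun h => hj h.2.1, mul_zero, add_zero]
      exact hterm _ _ i j (hGM i hi j hj).1
    · rw [if_neg fun h => hi h.1, mul_zero, add_zero]
      exact hterm _ _ i j (hGM j hj i hi).2
    · rw [if_neg fun h => hi h.1, mul_zero, add_zero]
      simp only [v, clusterDisplacement_of_notMem hi, clusterDisplacement_of_notMem hj,
        Prod.mk_zero_zero, map_zero, mul_zero, abs_zero]
      positivity
  have hsplit : fderiv ℝ (KRH Γ g G) z v + 1 / (2 * Real.pi) * clusterSum Γ C =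
      ∑ j, Γ j ^ 2 * fderiv ℝ (Function.uncurry g) (z j, z j) (v j, v j) +
        ∑ i, ∑ j, ((if i = j then 0 else
          Γ i * Γ j * fderiv ℝ (Function.uncurry G) (z i, z j) (v i, v j)) +
          1 / (2 * Real.pi) * (if i ∈ C ∧ j ∈ C ∧ i ≠ j then Γ i * Γ j else 0)) := by
    rw [fderiv_KRH_apply Γ (fun j => hgd j j) hGd, clusterSum_eq_sum_univ]
    simp only [Finset.mul_sum, Finset.sum_add_distrib]
    ring
  rw [hsplit]
  calc _ ≤ ∑ j, Γ j ^ 2 * (M * ‖v‖) + ∑ i, ∑ j, |Γ i * Γ j| * (M * ‖v‖) := by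
        refine (abs_add_le _ _).trans (add_le_add ?_ ?_)
        · exact (Finset.abs_sum_le_sum_abs _ _).trans (Finset.sum_le_sum fun j _ => hdiag j)
        · refine (Finset.abs_sum_le_sum_abs _ _).trans (Finset.sum_le_sum fun i _ => ?_)
          exact (Finset.abs_sum_le_sum_abs _ _).trans (Finset.sum_le_sum fun j _ => hoff i j)
    _ = _ := by simp only [← Finset.sum_mul]; ring

theorem eventually_abs_clusterSum_le_norm_gradient_KRH_mul (hΩ : IsOpen Ω)
    (hdec : IsLogDecomposition Ω G g) (hg : ContDiffOn ℝ 1 (Function.uncurry g) (Ω ×ˢ Ω))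
    (hGbd : ∀ ε' > (0 : ℝ), ∃ C₂ : ℝ, ∀ x ∈ Ω, ∀ y ∈ Ω, ε' ≤ dist x y →
      |G x y| + ‖gradient (fun w => G w y) x‖ + ‖gradient (fun w => G x w) y‖ ≤ C₂)
    (Γ : Fin N → ℝ) {zb : Conf N} {C : Finset (Fin N)} (hC : IsCluster zb C) {b : ℂ}
    (hb : b ∈ Ω) (hzbC : ∀ i ∈ C, zb i = b) :
    ∀ᶠ z in 𝓝 zb, z ∈ ConfigSp N Ω →
      |clusterSum Γ C| / (4 * Real.pi) ≤
        ‖gradient (KRH Γ g G) z‖ * ‖clusterDisplacement C b z‖ := by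
  set A := clusterSum Γ C
  rcases eq_or_ne A 0 with hA | hA
  · exact Eventually.of_forall fun z _ => by rw [hA, abs_zero, zero_div]; positivity
  obtain ⟨ε', hε', hsep⟩ := hC.exists_eventually_separated
  obtain ⟨C₂, hC₂⟩ := hGbd ε' hε'
  set M := max (‖fderiv ℝ (Function.uncurry g) (b, b)‖ + 1) C₂
  have hM : 0 ≤ M := le_max_of_le_left (by positivity)
  have hC₂M : C₂ ≤ M := le_max_right _ _
  have hgnear : ∀ᶠ z in 𝓝 zb, ∀ i ∈ C, ∀ j ∈ C,
      ‖fderiv ℝ (Function.uncurry g) (z i, z j)‖ ≤ M := by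
    refine (eventually_norm_apply_pair_lt hzbC ?_).mono
      fun z h i hi j hj => (h i hi j hj).le.trans (le_max_left _ _)
    exact (hg.continuousOn_fderiv_of_isOpen (hΩ.prod hΩ) le_rfl).continuousAt
      ((hΩ.prod hΩ).mem_nhds (mk_mem_prod hb hb))
  have hsmall : ∀ᶠ z in 𝓝 zb, (∑ j, Γ j ^ 2 + ∑ i, ∑ j, |Γ i * Γ j|) * M *
      ‖clusterDisplacement C b z‖ ≤ |A| / (4 * Real.pi) := by
    have := (tendsto_norm_clusterDisplacement hzbC).const_mul
      ((∑ j, Γ j ^ 2 + ∑ i, ∑ j, |Γ i * Γ j|) * M)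
    rw [mul_zero] at this
    exact this.eventually (ge_mem_nhds (by positivity))
  have hGnear : ∀ x ∈ Ω, ∀ y ∈ Ω, ε' ≤ dist x y →
      ‖fderiv ℝ (Function.uncurry G) (x, y)‖ ≤ M := fun x hx y hy hxy => by
    have := norm_fderiv_uncurry_le_norm_gradient <| hdec.differentiableAt hΩ
      (hg.differentiableOn one_ne_zero) hx hy (dist_pos.1 (hε'.trans_le hxy))
    linarith [hC₂ x hx y hy hxy, abs_nonneg (G x y)]
  filter_upwards [hsep, hgnear, hsmall] with z hzsep hzg hzsmall hz
  have hGM : ∀ i ∈ C, ∀ k ∉ C, ‖fderiv ℝ (Function.uncurry G) (z i, z k)‖ ≤ M ∧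
      ‖fderiv ℝ (Function.uncurry G) (z k, z i)‖ ≤ M := fun i hi k hk =>
    ⟨hGnear _ (hz.1 i) _ (hz.1 k) (hzsep i hi k hk),
      hGnear _ (hz.1 k) _ (hz.1 i) (dist_comm (z i) (z k) ▸ hzsep i hi k hk)⟩
  have hest := abs_fderiv_KRH_clusterDisplacement_add_le hΩ hdec
    (hg.differentiableOn one_ne_zero) Γ (b := b) hz hM hzg hGM
  have hgrad := abs_fderiv_apply_le_norm_gradient_mul (KRH Γ g G) z (clusterDisplacement C b z)
  have hhalf : 1 / (2 * Real.pi) * |A| = |A| / (4 * Real.pi) + |A| / (4 * Real.pi) := by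
    field_simp; ring
  set d := fderiv ℝ (KRH Γ g G) z (clusterDisplacement C b z)
  have htri := abs_sub (d + 1 / (2 * Real.pi) * A) d
  rw [add_sub_cancel_left, abs_mul, abs_of_pos (by positivity)] at htri
  linarith

end Estimate

theorem stmt_9_general {N : ℕ} (Ω : Set ℂ)
    (hΩo : IsOpen Ω)
    (G g : ℂ → ℂ → ℝ) (p : ℂ → ℂ) (ε : ℝ) (hG : GreenAssumptions Ω G g p ε)
    (Γ : Fin N → ℝ)
    (CΓ : ℝ)
    (hCΓ : ∀ C : Finset (Fin N), 2 ≤ C.card →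
      CΓ ≤ |∑ i ∈ C, ∑ j ∈ C, if i = j then 0 else Γ i * Γ j|)
    (zb : Conf N)
    (C : Finset (Fin N)) (hC : IsCluster zb C)
    (i₀ : Fin N) (hi₀ : i₀ ∈ C) (hint : zb i₀ ∈ Ω) :
    ∃ δ > (0:ℝ), ∀ z ∈ ConfigSp N Ω, dist z zb < δ →
      CΓ / (4 * Real.pi) / Real.sqrt (∑ i ∈ C, (‖z i - zb i₀‖) ^ 2) ≤
        ‖gradient (KRH Γ g G) z‖ := by
  obtain ⟨δ, hδ, hnear⟩ := Metric.eventually_nhds_iff.1 <|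
    eventually_abs_clusterSum_le_norm_gradient_KRH_mul hΩo hG.decomp hG.g_smooth hG.G_C1_bound Γ
      hC hint fun i hi => hC.2.1 i hi i₀ hi₀
  refine ⟨δ, hδ, fun z hz hzδ => ?_⟩
  have hpos : 0 < ‖clusterDisplacement C (zb i₀) z‖ :=
    norm_pos_iff.2 (clusterDisplacement_ne_zero hz.2 hC.1)
  rw [← norm_clusterDisplacement, div_le_iff₀ hpos]
  calc CΓ / (4 * Real.pi) ≤ |clusterSum Γ C| / (4 * Real.pi) := by gcongr; exact hCΓ C hC.1
    _ ≤ _ := hnear hzδ hz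

/-- Lemma (interior collisions): near an interior collision point `z̄` with interior
cluster `C`, `|∇H_Ω(z)| ≥ (C_Γ/(4π)) (Σ_{i∈C} |z_i − z̄_C|²)^{−1/2}`. -/
theorem stmt_9 {N : ℕ} (Ω : Set ℂ)
    (hΩo : IsOpen Ω) (hΩc : IsConnected Ω) (hΩb : Bornology.IsBounded Ω)
    (G g : ℂ → ℂ → ℝ) (p : ℂ → ℂ) (ε : ℝ) (hG : GreenAssumptions Ω G g p ε)
    (Γ : Fin N → ℝ) (hdadm : DeltaAdmissible Γ)
    (CΓ : ℝ)
    (hCΓ : ∀ C : Finset (Fin N), 2 ≤ C.card →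
      CΓ ≤ |∑ i ∈ C, ∑ j ∈ C, if i = j then 0 else Γ i * Γ j|)
    (zb : Conf N) (hzb : ∀ j, zb j ∈ closure Ω)
    (C : Finset (Fin N)) (hC : IsCluster zb C)
    (i₀ : Fin N) (hi₀ : i₀ ∈ C) (hint : zb i₀ ∈ Ω) :
    ∃ δ > (0:ℝ), ∀ z ∈ ConfigSp N Ω, dist z zb < δ →
      CΓ / (4 * Real.pi) / Real.sqrt (∑ i ∈ C, (‖z i - zb i₀‖) ^ 2) ≤
        ‖gradient (KRH Γ g G) z‖ :=
  stmt_9_general Ω hΩo G g p ε hG Γ CΓ hCΓ zb C hC i₀ hi₀ hint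
end
end

section
/- Assume ℂ ∖ cl(Ω) has a bounded connected component Ω₁ with 0 ∈ Ω₁. Then H_Ω is bounded above on S := {z ∈ F_NΩ : z_j/|z_j| = e^{2πij/N} for all j ∈ {1,…,N}}. -/
/-!
Since `0 ∉ cl Ω`, all points of `Ω` have modulus at least some `δ > 0`. On `S` the points
`z_i, z_j` lie on the rays through the distinct roots of unity `u_i ≠ u_j`, so
`|z_i - z_j| ≥ δ |u_i - u_j|`. Hence `G(z_i, z_j) = g - (1/2π) log |z_i - z_j|` is bounded
above on `S`; it is also bounded below, so every term `Γ_i Γ_j G(z_i, z_j)` is bounded above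
whatever the sign of `Γ_i Γ_j`, and so are the Robin terms `Γ_j² g(z_j, z_j)`.
-/

open Complex Metric Set Filter Topology
open scoped BigOperators Classical ENNReal

noncomputable section

lemma mul_norm_inv_smul_sub_le {E : Type*} [NormedAddCommGroup E] [InnerProductSpace ℝ E]
    {x y : E} {δ : ℝ} (hδ : 0 < δ) (hx : δ ≤ ‖x‖) (hy : δ ≤ ‖y‖) :
    δ * ‖‖x‖⁻¹ • x - ‖y‖⁻¹ • y‖ ≤ ‖x - y‖ := by
  set a := ‖x‖
  set b := ‖y‖
  have ha : 0 < a := hδ.trans_le hx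
  have hb : 0 < b := hδ.trans_le hy
  set p := inner ℝ x y
  have hp : p ≤ a * b := real_inner_le_norm x y
  have hunit : ‖a⁻¹ • x - b⁻¹ • y‖ ^ 2 = 2 * (a * b - p) / (a * b) := by
    rw [norm_sub_sq_real, norm_smul, norm_smul, real_inner_smul_left, real_inner_smul_right]
    simp only [norm_inv, Real.norm_eq_abs, abs_of_pos ha, abs_of_pos hb]
    field_simp
    ring
  have hsq : (δ * ‖a⁻¹ • x - b⁻¹ • y‖) ^ 2 ≤ ‖x - y‖ ^ 2 := by
    rw [mul_pow, hunit, norm_sub_sq_real, mul_div_assoc', div_le_iff₀ (by positivity)]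
    -- the difference of the two sides is `a b (a - b)² + 2 (a b - δ²)(a b - p)`
    nlinarith [mul_nonneg (mul_nonneg ha.le hb.le) (sq_nonneg (a - b)),
      mul_nonneg (sub_nonneg.2 (mul_le_mul hx hy hδ.le ha.le)) (sub_nonneg.2 hp)]
  exact (pow_le_pow_iff_left₀ (by positivity) (norm_nonneg _) two_ne_zero).1 hsq

lemma injective_exp_two_pi_I_mul_succ_div (N : ℕ) :
    Function.Injective fun j : Fin N =>
      Complex.exp (2 * Real.pi * Complex.I * (((j : ℕ) : ℂ) + 1) / (N : ℂ)) := by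
  intro i j hij
  have hζ := Complex.isPrimitiveRoot_exp N i.pos.ne'
  have hpow (k : ℕ) : Complex.exp (2 * Real.pi * Complex.I * ((k : ℂ) + 1) / N) =
      Complex.exp (2 * Real.pi * Complex.I / N) ^ k *
        Complex.exp (2 * Real.pi * Complex.I / N) := by
    rw [← Complex.exp_nat_mul, ← Complex.exp_add]
    ring_nf
  simp only [hpow] at hij
  exact Fin.ext (hζ.pow_inj i.isLt j.isLt (mul_right_cancel₀ (Complex.exp_ne_zero _) hij))

lemma green_le_sub_log_of_le_norm_sub {Ω : Set ℂ} {G g : ℂ → ℂ → ℝ}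
    (hdecomp : ∀ x ∈ Ω, ∀ y ∈ Ω, x ≠ y →
      G x y = g x y - (1 / (2 * Real.pi)) * Real.log (‖x - y‖))
    {C₁ : ℝ} (hC₁ : ∀ x ∈ Ω, ∀ y ∈ Ω, g x y ≤ C₁) {x y : ℂ} (hx : x ∈ Ω) (hy : y ∈ Ω)
    (hxy : x ≠ y) {r : ℝ} (hr : 0 < r) (hrxy : r ≤ ‖x - y‖) :
    G x y ≤ C₁ - (1 / (2 * Real.pi)) * Real.log r := by
  rw [hdecomp x hx y hy hxy]
  gcongr
  exact hC₁ x hx y hy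

lemma exists_KRH_le_of_le_norm_sub {N : ℕ} {Ω : Set ℂ} {G g : ℂ → ℂ → ℝ}
    (hlower : ∃ C₀ : ℝ, ∀ x ∈ Ω, ∀ y ∈ Ω, x ≠ y → C₀ ≤ G x y)
    (hdecomp : ∀ x ∈ Ω, ∀ y ∈ Ω, x ≠ y →
      G x y = g x y - (1 / (2 * Real.pi)) * Real.log (‖x - y‖))
    (hupper : ∃ C₁ : ℝ, ∀ x ∈ Ω, ∀ y ∈ Ω, g x y ≤ C₁)
    (Γ : Fin N → ℝ) (d : Fin N → Fin N → ℝ) (hd : ∀ i j, i ≠ j → 0 < d i j) :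
    ∃ B : ℝ, ∀ z ∈ ConfigSp N Ω, (∀ i j, i ≠ j → d i j ≤ ‖z i - z j‖) →
      KRH Γ g G z ≤ B := by
  obtain ⟨C₀, hC₀⟩ := hlower
  obtain ⟨C₁, hC₁⟩ := hupper
  refine ⟨∑ j, (Γ j) ^ 2 * C₁ + ∑ i, ∑ j, if i = j then 0 else
    |Γ i * Γ j| * max |C₀| |C₁ - (1 / (2 * Real.pi)) * Real.log (d i j)|, ?_⟩
  rintro z ⟨hmem, hinj⟩ hsep
  unfold KRH
  gcongr with j _ i _ j _
  · exact hC₁ _ (hmem j) _ (hmem j)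
  · split_ifs with hij
    · rfl
    have hzij : z i ≠ z j := hinj.ne hij
    have hGij : |G (z i) (z j)| ≤ max |C₀| |C₁ - (1 / (2 * Real.pi)) * Real.log (d i j)| :=
      abs_le_max_abs_abs (hC₀ _ (hmem i) _ (hmem j) hzij)
        (green_le_sub_log_of_le_norm_sub hdecomp hC₁ (hmem i) (hmem j) hzij (hd i j hij)
          (hsep i j hij))
    calc Γ i * Γ j * G (z i) (z j) ≤ |Γ i * Γ j| * |G (z i) (z j)| :=
          (le_abs_self _).trans (abs_mul _ _).le
      _ ≤ _ := by gcongr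

theorem stmt_16_general {N : ℕ} (Ω : Set ℂ)
    (h0 : (0:ℂ) ∉ closure Ω)
    (G g : ℂ → ℂ → ℝ)
    (hlower : ∃ C₀ : ℝ, ∀ x ∈ Ω, ∀ y ∈ Ω, x ≠ y → C₀ ≤ G x y)
    (hdecomp : ∀ x ∈ Ω, ∀ y ∈ Ω, x ≠ y →
      G x y = g x y - (1 / (2 * Real.pi)) * Real.log (‖x - y‖))
    (hupper : ∃ C₁ : ℝ, ∀ x ∈ Ω, ∀ y ∈ Ω, g x y ≤ C₁)
    (Γ : Fin N → ℝ) :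
    ∃ B : ℝ, ∀ z ∈ ConfigSp N Ω,
      (∀ j : Fin N, z j / (‖z j‖ : ℂ) =
        Complex.exp (2 * Real.pi * Complex.I * (((j : ℕ) : ℂ) + 1) / (N : ℂ))) →
      KRH Γ g G z ≤ B := by
  obtain ⟨δ, hδ, hδΩ⟩ : ∃ δ > 0, ∀ y ∈ Ω, δ ≤ ‖y‖ := by
    simpa [Metric.mem_closure_iff, dist_zero_left] using h0
  set u : Fin N → ℂ := fun j =>
    Complex.exp (2 * Real.pi * Complex.I * (((j : ℕ) : ℂ) + 1) / (N : ℂ))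
  obtain ⟨B, hB⟩ := exists_KRH_le_of_le_norm_sub hlower hdecomp hupper Γ
    (fun i j => δ * ‖u i - u j‖) fun i j hij => mul_pos hδ <|
      norm_pos_iff.2 <| sub_ne_zero.2 <| (injective_exp_two_pi_I_mul_succ_div N).ne hij
  refine ⟨B, fun z hz hS => hB z hz fun i j _ => ?_⟩
  have hdir (w : ℂ) : w / (‖w‖ : ℂ) = ‖w‖⁻¹ • w := by
    rw [Complex.real_smul, Complex.ofReal_inv, div_eq_inv_mul]
  simpa only [u, ← hS, hdir] using
    mul_norm_inv_smul_sub_le hδ (hδΩ _ (hz.1 i)) (hδΩ _ (hz.1 j))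

/-- Lemma: `H_Ω` is bounded above on the star-shaped set
`S = {z ∈ F_N Ω : z_j/|z_j| = e^{2πij/N}}`, when `0` lies in a bounded component of the
complement of `cl Ω`. -/
theorem stmt_16 {N : ℕ} (Ω : Set ℂ)
    (hΩo : IsOpen Ω) (hΩc : IsConnected Ω) (hΩb : Bornology.IsBounded Ω)
    (hextball : ∃ r > (0:ℝ), ∀ x ∈ frontier Ω, ∃ xs : ℂ,
      Metric.ball xs r ⊆ Ωᶜ ∧ dist x xs = r)
    (h0 : (0:ℂ) ∉ closure Ω)
    (hbc : Bornology.IsBounded (connectedComponentIn (closure Ω)ᶜ 0))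
    (G g : ℂ → ℂ → ℝ)
    (hlower : ∃ C₀ : ℝ, ∀ x ∈ Ω, ∀ y ∈ Ω, x ≠ y → C₀ ≤ G x y)
    (hdecomp : ∀ x ∈ Ω, ∀ y ∈ Ω, x ≠ y →
      G x y = g x y - (1 / (2 * Real.pi)) * Real.log (‖x - y‖))
    (hgsmooth : ContDiffOn ℝ 1 (fun q : ℂ × ℂ => g q.1 q.2) (Ω ×ˢ Ω))
    (hupper : ∃ C₁ : ℝ, ∀ x ∈ Ω, ∀ y ∈ Ω, g x y ≤ C₁)
    (Γ : Fin N → ℝ) :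
    ∃ B : ℝ, ∀ z ∈ ConfigSp N Ω,
      (∀ j : Fin N, z j / (‖z j‖ : ℂ) =
        Complex.exp (2 * Real.pi * Complex.I * (((j : ℕ) : ℂ) + 1) / (N : ℂ))) →
      KRH Γ g G z ≤ B :=
  stmt_16_general Ω h0 G g hlower hdecomp hupper Γ
end
end

section
/- For every integer n ≥ 1, the n×n tridiagonal matrix M with entries M_{j,j} = −j for 1 ≤ j ≤ n, M_{j,j−1} = (j−1)/2 for 2 ≤ j ≤ n, M_{j,j+1} = (j+1)/2 for 1 ≤ j ≤ n−1, and all other entries 0, is invertible; equivalently det M ≠ 0 (indeed its kernel is trivial: the first n−1 rows force any kernel vector to have all entries equal, and the last row then forces them to vanish). -/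
/-!
Write `w` for a kernel vector extended by zero. Row `i` of the matrix reads
`(i + 2) (w (i+1) - w i) = i (w i - w (i-1))`, and row `0` has no subdiagonal entry, so the
first `n - 1` rows force `w` to be constant on `{0, …, n-1}`. With `w n = 0`, the last row then
reads `-(n + 1)/2 · w 0 = 0`.
-/

open Matrix Finset

/-- Rows and columns are indexed from `0`, so row `i` is row `i + 1` of the paper's matrix. -/
noncomputable def linkingEntry (i k : ℕ) : ℝ :=
  if k + 1 = i then (i : ℝ) / 2
  else if i = k then -((i : ℝ) + 1)
  else if i + 1 = k then ((i : ℝ) + 2) / 2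
  else 0

noncomputable def linkingMatrix (n : ℕ) : Matrix (Fin n) (Fin n) ℝ :=
  of fun i k => linkingEntry i k

theorem mulVec_of_apply_eq_sum_range {R : Type*} [NonUnitalNonAssocSemiring R] {n : ℕ}
    (f : ℕ → ℕ → R) (v : Fin n → R) (i : Fin n) :
    ((of fun i k : Fin n => f i k) *ᵥ v) i =
      ∑ k ∈ range (n + 1), f i k * Function.extend Fin.val v 0 k := by
  rw [sum_range_succ, Function.extend_apply' _ _ _ fun ⟨k, hk⟩ => k.isLt.ne hk,
    ← Fin.sum_univ_eq_sum_range]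
  simp [mulVec, dotProduct, Fin.val_injective.extend_apply]

theorem sum_range_linkingEntry_mul (w : ℕ → ℝ) {i N : ℕ} (hi : i + 1 < N) :
    ∑ k ∈ range N, linkingEntry i k * w k =
      i / 2 * w (i - 1) - (i + 1) * w i + (i + 2) / 2 * w (i + 1) := by
  -- For `i = 0` the subdiagonal term is `0 / 2 * w 0`, so it may be written at `k = i - 1 = 0`.
  have hsplit : ∀ k, linkingEntry i k * w k =
      ((if k = i - 1 then i / 2 * w k else 0) + (if k = i then -(i + 1) * w k else 0)) +
        (if k = i + 1 then (i + 2) / 2 * w k else 0) := by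
    intro k
    unfold linkingEntry
    split_ifs <;> first | omega | ring1 | (obtain rfl : i = 0 := by omega); simp
  simp only [hsplit, sum_add_distrib, sum_ite_eq', mem_range,
    if_pos (show i - 1 < N by omega), if_pos (show i < N by omega), if_pos hi]
  ring

theorem eq_of_linkingEntry_rows {w : ℕ → ℝ} {n : ℕ}
    (h : ∀ i, i + 1 < n →
      (i : ℝ) / 2 * w (i - 1) - (i + 1) * w i + (i + 2) / 2 * w (i + 1) = 0) :
    ∀ i < n, w i = w 0 := by
  have hstep : ∀ i, i + 1 < n → w (i + 1) = w i := by
    intro i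
    induction i with
    | zero =>
      intro h1
      have hrow := h 0 h1
      simp only [CharP.cast_eq_zero, zero_div, zero_mul, zero_add, one_mul, zero_sub,
        ne_eq, OfNat.ofNat_ne_zero, not_false_eq_true, div_self] at hrow
      linarith
    | succ i ih =>
      intro hi
      have hrow := h (i + 1) hi
      rw [ih (by omega), Nat.add_sub_cancel] at hrow
      rw [ih (by omega)]
      have hdiff : ((i : ℝ) + 3) / 2 * (w (i + 2) - w i) = 0 := by
        push_cast at hrow
        linarith
      have hpos : ((i : ℝ) + 3) / 2 ≠ 0 := by positivity
      linarith [(mul_eq_zero.mp hdiff).resolve_left hpos]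
  intro i hi
  induction i with
  | zero => rfl
  | succ i ih => rw [hstep i hi, ih (by omega)]

theorem linkingMatrix_mulVec_eq_zero {n : ℕ} {v : Fin n → ℝ} (hv : linkingMatrix n *ᵥ v = 0) :
    v = 0 := by
  cases n with
  | zero => exact Subsingleton.elim _ _
  | succ m =>
  set w := Function.extend Fin.val v 0
  have hrow : ∀ i, i < m + 1 →
      (i : ℝ) / 2 * w (i - 1) - (i + 1) * w i + (i + 2) / 2 * w (i + 1) = 0 := fun i hi => by
    have hvi := congrFun hv ⟨i, hi⟩
    rwa [linkingMatrix, mulVec_of_apply_eq_sum_range,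
      sum_range_linkingEntry_mul _ (by omega)] at hvi
  have hconst := eq_of_linkingEntry_rows (n := m + 1) fun i hi => hrow i (by omega)
  have hlast := hrow m (by omega)
  have hw_top : w (m + 1) = 0 :=
    Function.extend_apply' _ _ _ fun ⟨k, hk⟩ => (k.isLt.ne hk).elim
  rw [hconst m (by omega), hconst (m - 1) (by omega), hw_top] at hlast
  have hw0 : w 0 = 0 := by
    have hpos : (m : ℝ) / 2 + 1 ≠ 0 := by positivity
    exact (mul_eq_zero.mp (by linarith : ((m : ℝ) / 2 + 1) * w 0 = 0)).resolve_left hpos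
  funext k
  rw [Pi.zero_apply, ← Fin.val_injective.extend_apply v 0 k, ← hw0]
  exact hconst k k.isLt

theorem linkingMatrix_det_ne_zero (n : ℕ) : (linkingMatrix n).det ≠ 0 := fun hdet => by
  obtain ⟨v, hv0, hv⟩ := exists_mulVec_eq_zero_iff.mpr hdet
  exact hv0 (linkingMatrix_mulVec_eq_zero hv)

theorem stmt_19_general (n : ℕ) :
    (Matrix.of fun i k : Fin n =>
      if (k : ℕ) + 1 = (i : ℕ) then ((i : ℕ) : ℝ) / 2
      else if (i : ℕ) = (k : ℕ) then -(((i : ℕ) : ℝ) + 1)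
      else if (i : ℕ) + 1 = (k : ℕ) then (((i : ℕ) : ℝ) + 2) / 2
      else 0).det ≠ 0 :=
  linkingMatrix_det_ne_zero n

/-- The tridiagonal matrix with diagonal `−r`, subdiagonal `(r−1)/2` and superdiagonal
`(r+1)/2` (1-based indexing) has nonzero determinant, hence is invertible. -/
theorem stmt_19 (n : ℕ) (hn : 1 ≤ n) :
    (Matrix.of fun i k : Fin n =>
      if (k : ℕ) + 1 = (i : ℕ) then ((i : ℕ) : ℝ) / 2
      else if (i : ℕ) = (k : ℕ) then -(((i : ℕ) : ℝ) + 1)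
      else if (i : ℕ) + 1 = (k : ℕ) then (((i : ℕ) : ℝ) + 2) / 2
      else 0).det ≠ 0 :=
  stmt_19_general n
end
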